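/- arXiv:2201.06319 — 4 statements merged into one kernel-verified Lean document; each statement's English description precedes it below -/
import Mathlib

section
/- Every distortion function g can be written as g(u) = d_r·h_r(u) + d_l·h_l(u) for all u ∈ [0,1], where h_r is a right-continuous distortion function, h_l is a left-continuous distortion function, and d_r, d_l ∈ [0,1] with d_r + d_l = 1. -/
open Set

/-- A distortion function. -/
def IsDistortion (g : ℝ → ℝ) : Prop :=
  MonotoneOn g (Icc 0 1) ∧ (∀ u ∈ Icc (0:ℝ) 1, g u ∈ Icc (0:ℝ) 1) ∧ g 0 = 0 ∧ g 1 = 1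

open Filter Topology MeasureTheory

/-! The right jumps of a function `g` monotone on `[a, b]` leave gaps `(g v, g (v+))` in its
range. Let `F y` be the Lebesgue measure of the part of these gaps below the level `y`. Then `F`
is monotone and `1`-Lipschitz, so `F ∘ g` and `g - F ∘ g` are monotone. Across a right gap `F`
grows with slope `1`, so `g - F ∘ g` has no right jumps; no right gap meets a left gap
`(g (u-), g u]`, so `F ∘ g` has no left jumps. Normalising both parts by their total increase
writes a distortion function as a convex combination. -/

noncomputable def cumulativeVolume (S : Set ℝ) (c y : ℝ) : ℝ := volume.real (S ∩ Ioc c y)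

section CumulativeVolume

variable (S : Set ℝ) (c : ℝ)

lemma volume_inter_Ioc_ne_top (x y : ℝ) : volume (S ∩ Ioc x y) ≠ ⊤ :=
  ((measure_mono inter_subset_right).trans_lt measure_Ioc_lt_top).ne

lemma cumulativeVolume_mono : Monotone (cumulativeVolume S c) := fun _ _ hxy =>
  measureReal_mono (inter_subset_inter_right _ (Ioc_subset_Ioc_right hxy))
    (volume_inter_Ioc_ne_top S c _)

lemma cumulativeVolume_le_add {x y : ℝ} (hxy : x ≤ y) :
    cumulativeVolume S c y ≤ cumulativeVolume S c x + (y - x) := by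
  have hcover : S ∩ Ioc c y ⊆ (S ∩ Ioc c x) ∪ Ioc x y := by
    rintro z ⟨hzS, hcz, hzy⟩
    by_cases hzx : z ≤ x
    · exact Or.inl ⟨hzS, hcz, hzx⟩
    · exact Or.inr ⟨not_le.1 hzx, hzy⟩
  calc cumulativeVolume S c y ≤ volume.real ((S ∩ Ioc c x) ∪ Ioc x y) :=
        measureReal_mono hcover (measure_union_ne_top (volume_inter_Ioc_ne_top S c x)
          measure_Ioc_lt_top.ne)
    _ ≤ cumulativeVolume S c x + volume.real (Ioc x y) := measureReal_union_le _ _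
    _ = cumulativeVolume S c x + (y - x) := by rw [Real.volume_real_Ioc_of_le hxy]

lemma continuous_cumulativeVolume : Continuous (cumulativeVolume S c) := by
  refine (LipschitzWith.of_le_add_mul 1 fun x y => ?_).continuous
  rw [NNReal.coe_one, one_mul, Real.dist_eq]
  rcases le_total x y with hxy | hyx
  · linarith [cumulativeVolume_mono S c hxy, abs_nonneg (x - y)]
  · linarith [cumulativeVolume_le_add S c hyx, le_abs_self (x - y)]

lemma monotone_sub_cumulativeVolume : Monotone fun y => y - cumulativeVolume S c y :=
  fun _ _ hxy => by linarith [cumulativeVolume_le_add S c hxy]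

variable {S c}

lemma cumulativeVolume_eq_add_of_Ioo_subset {x y : ℝ} (hcx : c ≤ x) (hxy : x ≤ y)
    (hS : Ioo x y ⊆ S) : cumulativeVolume S c y = cumulativeVolume S c x + (y - x) := by
  refine le_antisymm (cumulativeVolume_le_add S c hxy) ?_
  have hsub : (S ∩ Ioc c x) ∪ Ioo x y ⊆ S ∩ Ioc c y := union_subset
    (inter_subset_inter_right _ (Ioc_subset_Ioc_right hxy))
    (fun z hz => ⟨hS hz, hcx.trans_lt hz.1, hz.2.le⟩)
  have hdisj : Disjoint (S ∩ Ioc c x) (Ioo x y) :=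
    disjoint_left.2 fun _ hz hz' => (hz.2.2.trans_lt hz'.1).false
  calc cumulativeVolume S c x + (y - x)
      = volume.real ((S ∩ Ioc c x) ∪ Ioo x y) := by
        rw [measureReal_union hdisj measurableSet_Ioo (volume_inter_Ioc_ne_top S c x)
          measure_Ioo_lt_top.ne, Real.volume_real_Ioo_of_le hxy, cumulativeVolume]
    _ ≤ cumulativeVolume S c y := measureReal_mono hsub (volume_inter_Ioc_ne_top S c y)

lemma cumulativeVolume_eq_of_disjoint {x y : ℝ} (hxy : x ≤ y) (hS : Disjoint S (Ioc x y)) :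
    cumulativeVolume S c y = cumulativeVolume S c x := by
  refine le_antisymm (measureReal_mono ?_ (volume_inter_Ioc_ne_top S c x))
    (cumulativeVolume_mono S c hxy)
  rintro z ⟨hzS, hcz, hzy⟩
  refine ⟨hzS, hcz, not_lt.1 fun hxz => ?_⟩
  exact disjoint_left.1 hS hzS ⟨hxz, hzy⟩

end CumulativeVolume

noncomputable def rightJumpGaps (a b : ℝ) (g : ℝ → ℝ) : Set ℝ :=
  ⋃ v ∈ Ico a b, Ioo (g v) (sInf (g '' Ioo v b))

noncomputable def leftContinuousPart (a b : ℝ) (g : ℝ → ℝ) (u : ℝ) : ℝ :=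
  cumulativeVolume (rightJumpGaps a b g) (g a) (g u)

noncomputable def rightContinuousPart (a b : ℝ) (g : ℝ → ℝ) (u : ℝ) : ℝ :=
  g u - leftContinuousPart a b g u

section MonotoneOnIcc

variable {a b u : ℝ} {g : ℝ → ℝ}

lemma Ioo_subset_rightJumpGaps (hu : u ∈ Ico a b) :
    Ioo (g u) (sInf (g '' Ioo u b)) ⊆ rightJumpGaps a b g :=
  subset_biUnion_of_mem (u := fun v => Ioo (g v) (sInf (g '' Ioo v b))) hu

lemma MonotoneOn.le_of_mem_Ioo_right (hg : MonotoneOn g (Icc a b)) (hu : u ∈ Ico a b) :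
    ∀ t ∈ Ioo u b, g u ≤ g t :=
  fun _ ht => hg ⟨hu.1, hu.2.le⟩ ⟨hu.1.trans ht.1.le, ht.2.le⟩ ht.1.le

lemma MonotoneOn.le_of_mem_Ioo_left (hg : MonotoneOn g (Icc a b)) (hu : u ∈ Ioc a b) :
    ∀ t ∈ Ioo a u, g t ≤ g u :=
  fun _ ht => hg ⟨ht.1.le, ht.2.le.trans hu.2⟩ ⟨hu.1.le, hu.2⟩ ht.2.le

lemma MonotoneOn.le_sInf_image_Ioo (hg : MonotoneOn g (Icc a b)) (hu : u ∈ Ico a b) :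
    g u ≤ sInf (g '' Ioo u b) :=
  le_csInf ((nonempty_Ioo.2 hu.2).image g) (forall_mem_image.2 (hg.le_of_mem_Ioo_right hu))

lemma MonotoneOn.sSup_image_Ioo_le (hg : MonotoneOn g (Icc a b)) (hu : u ∈ Ioc a b) :
    sSup (g '' Ioo a u) ≤ g u :=
  csSup_le ((nonempty_Ioo.2 hu.1).image g) (forall_mem_image.2 (hg.le_of_mem_Ioo_left hu))

lemma MonotoneOn.tendsto_nhdsGT_of_mem_Ico (hg : MonotoneOn g (Icc a b)) (hu : u ∈ Ico a b) :
    Tendsto g (𝓝[>] u) (𝓝 (sInf (g '' Ioo u b))) :=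
  (hg.mono (Ioo_subset_Icc_self.trans (Icc_subset_Icc_left hu.1))).tendsto_nhdsWithin_Ioo_right
    (nonempty_Ioo.2 hu.2) ⟨g u, forall_mem_image.2 (hg.le_of_mem_Ioo_right hu)⟩

lemma MonotoneOn.tendsto_nhdsLT_of_mem_Ioc (hg : MonotoneOn g (Icc a b)) (hu : u ∈ Ioc a b) :
    Tendsto g (𝓝[<] u) (𝓝 (sSup (g '' Ioo a u))) :=
  (hg.mono (Ioo_subset_Icc_self.trans (Icc_subset_Icc_right hu.2))).tendsto_nhdsWithin_Ioo_left
    (nonempty_Ioo.2 hu.1) ⟨g u, forall_mem_image.2 (hg.le_of_mem_Ioo_left hu)⟩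

lemma MonotoneOn.disjoint_rightJumpGaps_Ioc (hg : MonotoneOn g (Icc a b)) (hu : u ∈ Ioc a b) :
    Disjoint (rightJumpGaps a b g) (Ioc (sSup (g '' Ioo a u)) (g u)) := by
  refine disjoint_left.2 fun y hy ⟨hy_gt, hy_le⟩ => ?_
  obtain ⟨v, hv, hgv, hy_lt⟩ := mem_iUnion₂.1 hy
  rcases le_or_gt u v with huv | hvu
  · exact (hy_le.trans (hg ⟨hu.1.le, hu.2⟩ ⟨hu.1.le.trans huv, hv.2.le⟩ huv)).not_gt hgv
  · obtain ⟨t, hvt, htu⟩ := exists_between hvu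
    have h_right : sInf (g '' Ioo v b) ≤ g t :=
      csInf_le ⟨g v, forall_mem_image.2 (hg.le_of_mem_Ioo_right hv)⟩
        (mem_image_of_mem g ⟨hvt, htu.trans_le hu.2⟩)
    have h_left : g t ≤ sSup (g '' Ioo a u) :=
      le_csSup ⟨g u, forall_mem_image.2 (hg.le_of_mem_Ioo_left hu)⟩
        (mem_image_of_mem g ⟨hv.1.trans_lt hvt, htu⟩)
    linarith

lemma leftContinuousPart_left_eq_zero : leftContinuousPart a b g a = 0 := by
  simp [leftContinuousPart, cumulativeVolume]

lemma rightContinuousPart_left_eq : rightContinuousPart a b g a = g a := by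
  simp [rightContinuousPart, leftContinuousPart_left_eq_zero]

lemma rightContinuousPart_add_leftContinuousPart (u : ℝ) :
    rightContinuousPart a b g u + leftContinuousPart a b g u = g u :=
  sub_add_cancel _ _

lemma MonotoneOn.monotoneOn_leftContinuousPart (hg : MonotoneOn g (Icc a b)) :
    MonotoneOn (leftContinuousPart a b g) (Icc a b) :=
  (cumulativeVolume_mono _ _).comp_monotoneOn hg

lemma MonotoneOn.monotoneOn_rightContinuousPart (hg : MonotoneOn g (Icc a b)) :
    MonotoneOn (rightContinuousPart a b g) (Icc a b) :=
  (monotone_sub_cumulativeVolume _ _).comp_monotoneOn hg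

lemma MonotoneOn.continuousWithinAt_leftContinuousPart (hg : MonotoneOn g (Icc a b))
    (hu : u ∈ Ioc a b) : ContinuousWithinAt (leftContinuousPart a b g) (Iic u) u := by
  have hlim := ((continuous_cumulativeVolume (rightJumpGaps a b g) (g a)).tendsto _).comp
    (hg.tendsto_nhdsLT_of_mem_Ioc hu)
  rw [← cumulativeVolume_eq_of_disjoint (hg.sSup_image_Ioo_le hu)
    (hg.disjoint_rightJumpGaps_Ioc hu)] at hlim
  exact continuousWithinAt_Iio_iff_Iic.1 hlim

lemma MonotoneOn.continuousWithinAt_rightContinuousPart (hg : MonotoneOn g (Icc a b))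
    (hu : u ∈ Ico a b) : ContinuousWithinAt (rightContinuousPart a b g) (Ici u) u := by
  set F := cumulativeVolume (rightJumpGaps a b g) (g a)
  set gu := sInf (g '' Ioo u b)
  have hlim : Tendsto (rightContinuousPart a b g) (𝓝[>] u) (𝓝 (gu - F gu)) :=
    ((continuous_id.sub (continuous_cumulativeVolume _ _)).tendsto gu).comp
      (hg.tendsto_nhdsGT_of_mem_Ico hu)
  have hjump : F gu = F (g u) + (gu - g u) :=
    cumulativeVolume_eq_add_of_Ioo_subset
      (hg ⟨le_rfl, hu.1.trans hu.2.le⟩ ⟨hu.1, hu.2.le⟩ hu.1) (hg.le_sInf_image_Ioo hu)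
      (Ioo_subset_rightJumpGaps hu)
  rw [hjump, show gu - (F (g u) + (gu - g u)) = rightContinuousPart a b g u by
    rw [rightContinuousPart, leftContinuousPart]; ring] at hlim
  exact continuousWithinAt_Ioi_iff_Ici.1 hlim

end MonotoneOnIcc

noncomputable def normalizeDistortion (h : ℝ → ℝ) : ℝ → ℝ :=
  if h 1 = 0 then id else fun u => h u / h 1

section NormalizeDistortion

variable {h : ℝ → ℝ}

lemma MonotoneOn.nonneg_of_map_zero (hh : MonotoneOn h (Icc 0 1)) (h0 : h 0 = 0) {u : ℝ}
    (hu : u ∈ Icc (0:ℝ) 1) : 0 ≤ h u :=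
  h0 ▸ hh (left_mem_Icc.2 zero_le_one) hu hu.1

lemma MonotoneOn.isDistortion_normalizeDistortion (hh : MonotoneOn h (Icc 0 1)) (h0 : h 0 = 0) :
    IsDistortion (normalizeDistortion h) := by
  unfold normalizeDistortion
  split_ifs with h1
  · exact ⟨monotoneOn_id, fun _ hu => hu, rfl, rfl⟩
  have hpos : 0 < h 1 := (hh.nonneg_of_map_zero h0 (right_mem_Icc.2 zero_le_one)).lt_of_ne' h1
  refine ⟨fun x hx y hy hxy => div_le_div_of_nonneg_right (hh hx hy hxy) hpos.le,
    fun u hu => ⟨div_nonneg (hh.nonneg_of_map_zero h0 hu) hpos.le, ?_⟩, by simp [h0],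
    div_self h1⟩
  exact div_le_one_of_le₀ (hh hu (right_mem_Icc.2 zero_le_one) hu.2) hpos.le

lemma MonotoneOn.eq_mul_normalizeDistortion (hh : MonotoneOn h (Icc 0 1)) (h0 : h 0 = 0)
    {u : ℝ} (hu : u ∈ Icc (0:ℝ) 1) : h u = h 1 * normalizeDistortion h u := by
  unfold normalizeDistortion
  split_ifs with h1
  · rw [h1, zero_mul]
    exact le_antisymm (h1 ▸ hh hu (right_mem_Icc.2 zero_le_one) hu.2)
      (hh.nonneg_of_map_zero h0 hu)
  · exact (mul_div_cancel₀ _ h1).symm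

lemma ContinuousWithinAt.normalizeDistortion {s : Set ℝ} {u : ℝ}
    (hc : ContinuousWithinAt h s u) : ContinuousWithinAt (normalizeDistortion h) s u := by
  unfold _root_.normalizeDistortion
  split_ifs
  · exact continuousWithinAt_id
  · exact hc.div_const _

end NormalizeDistortion

/-- Every distortion function `g` can be written as a convex combination
`g = d_r·h_r + d_l·h_l` on `[0,1]` of a right-continuous distortion function `h_r`
and a left-continuous distortion function `h_l`. -/
theorem distortion_convex_decomposition (g : ℝ → ℝ) (hg : IsDistortion g) :
    ∃ (d_r d_l : ℝ) (h_r h_l : ℝ → ℝ),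
      d_r ∈ Icc (0:ℝ) 1 ∧ d_l ∈ Icc (0:ℝ) 1 ∧ d_r + d_l = 1 ∧
      IsDistortion h_r ∧ IsDistortion h_l ∧
      (∀ u ∈ Ico (0:ℝ) 1, ContinuousWithinAt h_r (Ici u) u) ∧
      (∀ u ∈ Ioc (0:ℝ) 1, ContinuousWithinAt h_l (Iic u) u) ∧
      ∀ u ∈ Icc (0:ℝ) 1, g u = d_r * h_r u + d_l * h_l u := by
  obtain ⟨hmono, -, hg0, hg1⟩ := hg
  set hr := rightContinuousPart 0 1 g
  set hl := leftContinuousPart 0 1 g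
  have hr_mono := hmono.monotoneOn_rightContinuousPart
  have hl_mono := hmono.monotoneOn_leftContinuousPart
  have hr0 : hr 0 = 0 := rightContinuousPart_left_eq.trans hg0
  have hl0 : hl 0 = 0 := leftContinuousPart_left_eq_zero
  have hr1 : 0 ≤ hr 1 := hr_mono.nonneg_of_map_zero hr0 (right_mem_Icc.2 zero_le_one)
  have hl1 : 0 ≤ hl 1 := hl_mono.nonneg_of_map_zero hl0 (right_mem_Icc.2 zero_le_one)
  have hsum : hr 1 + hl 1 = 1 := (rightContinuousPart_add_leftContinuousPart 1).trans hg1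
  refine ⟨hr 1, hl 1, normalizeDistortion hr, normalizeDistortion hl, ⟨hr1, by linarith⟩,
    ⟨hl1, by linarith⟩, hsum, hr_mono.isDistortion_normalizeDistortion hr0,
    hl_mono.isDistortion_normalizeDistortion hl0,
    fun u hu => (hmono.continuousWithinAt_rightContinuousPart hu).normalizeDistortion,
    fun u hu => (hmono.continuousWithinAt_leftContinuousPart hu).normalizeDistortion,
    fun u hu => ?_⟩
  rw [← hr_mono.eq_mul_normalizeDistortion hr0 hu, ← hl_mono.eq_mul_normalizeDistortion hl0 hu]
  exact (rightContinuousPart_add_leftContinuousPart u).symm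
end

section
/- Let g be a left-continuous distortion function and X a bounded random variable on a probability space. Then ρ_g(X) = ∫_{[0,1]} q_X(1-u) dg(u), where q_X(u) = inf{x : F_X(x) ≥ u} is the lower quantile function and the integral is the Lebesgue–Stieltjes integral with respect to the measure induced by g. -/
open Set MeasureTheory

/-- The distortion risk measure
`ρ_g(X) = ∫_{-∞}^0 (g(P(X > x)) - 1) dx + ∫_0^∞ g(P(X > x)) dx`. -/
noncomputable def rho {Ω : Type*} [MeasurableSpace Ω] (P : Measure Ω)
    (g : ℝ → ℝ) (X : Ω → ℝ) : ℝ :=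
  (∫ x in Iio (0:ℝ), (g ((P {ω | x < X ω}).toReal) - 1)) +
    ∫ x in Ioi (0:ℝ), g ((P {ω | x < X ω}).toReal)

/-- The lower quantile function `q_F(u) = inf {x | F x ≥ u}`. -/
noncomputable def lowerQuantile (F : ℝ → ℝ) (u : ℝ) : ℝ :=
  sInf {x : ℝ | u ≤ F x}

open Filter Topology ProbabilityTheory

/-! Under `μ`, the variable `u ↦ q_X(1 - u)` has tail `μ {x < q_X(1 - u)} = μ [0, P(X > x)) =
g(P(X > x))`, because for `p ∈ (0, 1]` the right-continuity of the distribution function gives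
`q_X(p) ≤ x ↔ p ≤ F_X(x)`. So `ρ_g(X)` is the layer-cake formula for its `μ`-expectation. -/

theorem integral_eq_integral_Iio_add_integral_Ioi_measureReal_lt {α : Type*} [MeasurableSpace α]
    {μ : Measure α} [IsProbabilityMeasure μ] {f : α → ℝ} (hf : Integrable f μ) :
    ∫ a, f a ∂μ =
      (∫ t in Iio 0, (μ.real {a | t < f a} - 1)) + ∫ t in Ioi 0, μ.real {a | t < f a} := by
  set G : ℝ → ℝ := fun s => 1 - μ.real {a | s < f a}
  have hpos : ∫ a, ((f a).toNNReal : ℝ) ∂μ = ∫ t in Ioi 0, μ.real {a | t < f a} := by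
    rw [hf.real_toNNReal.integral_eq_integral_meas_lt (ae_of_all _ fun a => by positivity)]
    refine setIntegral_congr_fun measurableSet_Ioi fun t (ht : 0 < t) => ?_
    simp only [Real.coe_toNNReal', lt_max_iff, ht.not_gt, or_false]
  have hneg : ∫ a, ((-f a).toNNReal : ℝ) ∂μ = ∫ t in Iio 0, G t := calc
    _ = ∫ t in Ioi 0, μ.real {a | t ≤ ((-f a).toNNReal : ℝ)} :=
      Integrable.integral_eq_integral_meas_le (f := fun a => ((-f a).toNNReal : ℝ))
        hf.neg.real_toNNReal (ae_of_all _ fun a => by positivity)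
    _ = ∫ t in Ioi 0, G (-t) := by
      refine setIntegral_congr_fun measurableSet_Ioi fun t (ht : 0 < t) => ?_
      have hcompl : {a | t ≤ ((-f a).toNNReal : ℝ)} = {a | -t < f a}ᶜ := by
        ext a
        simp only [Real.coe_toNNReal', le_max_iff, ht.not_ge, or_false, mem_ofPred_eq,
          mem_compl_iff, not_lt, le_neg]
      rw [hcompl, probReal_compl_eq_one_sub₀ (nullMeasurableSet_lt aemeasurable_const hf.aemeasurable)]
    _ = ∫ t in Iic 0, G t := by rw [integral_comp_neg_Ioi, neg_zero]
    _ = ∫ t in Iio 0, G t := integral_Iic_eq_integral_Iio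
  rw [integral_eq_integral_pos_part_sub_integral_neg_part hf, hpos, hneg, sub_eq_neg_add,
    ← integral_neg]
  simp only [G, neg_sub]

theorem StieltjesFunction.lowerQuantile_le_iff (F : StieltjesFunction ℝ) {p : ℝ}
    (hne : ∃ y, p ≤ F y) (hbdd : BddBelow {y | p ≤ F y}) (x : ℝ) :
    lowerQuantile F p ≤ x ↔ p ≤ F x := by
  refine ⟨fun hx => ?_, fun hx => csInf_le hbdd hx⟩
  set q := lowerQuantile F p
  have hright : Tendsto F (𝓝[>] q) (𝓝 (F q)) :=
    (F.right_continuous q).mono Ioi_subset_Ici_self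
  have hq : p ≤ F q := by
    refine ge_of_tendsto hright (eventually_nhdsWithin_of_forall fun y (hy : q < y) => ?_)
    obtain ⟨z, hz, hzy⟩ := exists_lt_of_csInf_lt hne hy
    exact le_trans hz (F.mono hzy.le)
  exact hq.trans (F.mono hx)

section BoundedSupport

variable {ν : Measure ℝ} {a b : ℝ}

theorem lowerQuantile_cdf_le_iff (ha : ∀ x < a, cdf ν x = 0) (hb : cdf ν b = 1) {p : ℝ}
    (hp : p ∈ Ioc 0 1) (x : ℝ) : lowerQuantile (cdf ν) p ≤ x ↔ p ≤ cdf ν x := by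
  refine (cdf ν).lowerQuantile_le_iff ⟨b, hb ▸ hp.2⟩ ⟨a, fun y hy => ?_⟩ x
  by_contra! hya
  have hpy : p ≤ cdf ν y := hy
  linarith [ha y hya, hp.1]

theorem lowerQuantile_cdf_mem_Icc (ha : ∀ x < a, cdf ν x = 0) (hb : cdf ν b = 1) {p : ℝ}
    (hp : p ∈ Ioc 0 1) : lowerQuantile (cdf ν) p ∈ Icc a b := by
  refine ⟨?_, (lowerQuantile_cdf_le_iff ha hb hp b).2 (hb ▸ hp.2)⟩
  by_contra! hqa
  have hpq := (lowerQuantile_cdf_le_iff ha hb hp _).1 le_rfl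
  linarith [ha _ hqa, hp.1]

theorem monotoneOn_lowerQuantile_cdf (ha : ∀ x < a, cdf ν x = 0) (hb : cdf ν b = 1) :
    MonotoneOn (lowerQuantile (cdf ν)) (Ioc 0 1) := fun _ hp _ hp' hpp' =>
  (lowerQuantile_cdf_le_iff ha hb hp _).2 <|
    hpp'.trans ((lowerQuantile_cdf_le_iff ha hb hp' _).1 le_rfl)

theorem lt_lowerQuantile_cdf_one_sub_iff (ha : ∀ x < a, cdf ν x = 0) (hb : cdf ν b = 1)
    {u : ℝ} (hu : u ∈ Ico 0 1) (x : ℝ) :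
    x < lowerQuantile (cdf ν) (1 - u) ↔ u < 1 - cdf ν x := by
  rw [← not_le, lowerQuantile_cdf_le_iff ha hb ⟨by linarith [hu.2], by linarith [hu.1]⟩]
  constructor <;> intro h <;> linarith

variable {μ : Measure ℝ}

theorem measure_lt_lowerQuantile_cdf_one_sub (ha : ∀ x < a, cdf ν x = 0) (hb : cdf ν b = 1)
    (hμ : μ (Ico 0 1)ᶜ = 0) (x : ℝ) :
    μ {u | x < lowerQuantile (cdf ν) (1 - u)} = μ (Ico 0 (1 - cdf ν x)) := by
  rw [← measure_inter_conull hμ]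
  congr 1
  ext u
  constructor
  · rintro ⟨hx, hu⟩
    exact ⟨hu.1, (lt_lowerQuantile_cdf_one_sub_iff ha hb hu x).1 hx⟩
  · rintro ⟨hu0, hu⟩
    have hu1 : u < 1 := hu.trans_le (by linarith [cdf_nonneg ν x])
    exact ⟨(lt_lowerQuantile_cdf_one_sub_iff ha hb ⟨hu0, hu1⟩ x).2 hu, hu0, hu1⟩

theorem integrable_lowerQuantile_cdf_one_sub [IsFiniteMeasure μ] (ha : ∀ x < a, cdf ν x = 0)
    (hb : cdf ν b = 1) (hμ : μ (Ico 0 1)ᶜ = 0) :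
    Integrable (fun u => lowerQuantile (cdf ν) (1 - u)) μ := by
  have hIco : ∀ᵐ u ∂μ, u ∈ Ico (0:ℝ) 1 := hμ
  have hp : ∀ u ∈ Ico (0:ℝ) 1, 1 - u ∈ Ioc (0:ℝ) 1 := fun u hu =>
    ⟨by linarith [hu.2], by linarith [hu.1]⟩
  have hanti : AntitoneOn (fun u => lowerQuantile (cdf ν) (1 - u)) (Ico 0 1) :=
    fun u hu v hv huv => monotoneOn_lowerQuantile_cdf ha hb (hp v hv) (hp u hu) (by linarith)
  have hmeas := aemeasurable_restrict_of_antitoneOn (μ := μ) measurableSet_Ico hanti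
  rw [Measure.restrict_eq_self_of_ae_mem hIco] at hmeas
  refine .of_bound hmeas.aestronglyMeasurable (max |a| |b|) ?_
  filter_upwards [hIco] with u hu
  obtain ⟨hqa, hqb⟩ := lowerQuantile_cdf_mem_Icc ha hb (hp u hu)
  exact abs_le_max_abs_abs hqa hqb

end BoundedSupport

section BoundedRandomVariable

variable {Ω : Type*} [MeasurableSpace Ω] {P : Measure Ω} [IsProbabilityMeasure P] {X : Ω → ℝ}

theorem cdf_map_apply (hX : Measurable X) (x : ℝ) :
    cdf (P.map X) x = (P {ω | X ω ≤ x}).toReal := by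
  have : IsProbabilityMeasure (P.map X) := Measure.isProbabilityMeasure_map hX.aemeasurable
  rw [cdf_eq_real, map_measureReal_apply hX measurableSet_Iic]
  rfl

theorem toReal_measure_lt_eq_one_sub_cdf_map (hX : Measurable X) (x : ℝ) :
    (P {ω | x < X ω}).toReal = 1 - cdf (P.map X) x := by
  rw [cdf_map_apply hX, ← measureReal_def, ← measureReal_def,
    ← probReal_compl_eq_one_sub (measurableSet_le hX measurable_const)]
  simp only [compl_ofPred, not_le]

theorem cdf_map_eq_zero_of_lt_neg (hX : Measurable X) {C : ℝ} (hC : ∀ ω, |X ω| ≤ C) :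
    ∀ x < -C, cdf (P.map X) x = 0 := fun x hx => by
  have hempty : {ω | X ω ≤ x} = ∅ :=
    eq_empty_of_forall_notMem fun ω (hω : X ω ≤ x) => by linarith [neg_abs_le (X ω), hC ω]
  rw [cdf_map_apply hX, hempty, measure_empty, ENNReal.toReal_zero]

theorem cdf_map_eq_one (hX : Measurable X) {C : ℝ} (hC : ∀ ω, |X ω| ≤ C) :
    cdf (P.map X) C = 1 := by
  have huniv : {ω | X ω ≤ C} = univ :=
    eq_univ_of_forall fun ω => (le_abs_self (X ω)).trans (hC ω)
  rw [cdf_map_apply hX, huniv, measure_univ, ENNReal.toReal_one]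

end BoundedRandomVariable

namespace IsDistortion

variable {g : ℝ → ℝ} {μ : Measure ℝ}

theorem measureReal_Ico_zero (hg : IsDistortion g)
    (hμ : ∀ a b : ℝ, 0 ≤ a → a ≤ b → b ≤ 1 → μ (Ico a b) = ENNReal.ofReal (g b - g a))
    {s : ℝ} (hs : s ∈ Icc 0 1) : μ.real (Ico 0 s) = g s := by
  obtain ⟨-, hg_mem, hg0, -⟩ := hg
  rw [measureReal_def, hμ 0 s le_rfl hs.1 hs.2, hg0, sub_zero,
    ENNReal.toReal_ofReal (hg_mem s hs).1]

theorem measure_compl_Ico_zero_one (hg : IsDistortion g)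
    (hμ : ∀ a b : ℝ, 0 ≤ a → a ≤ b → b ≤ 1 → μ (Ico a b) = ENNReal.ofReal (g b - g a))
    (hμ1 : μ (Icc 0 1) = 1) (hμc : μ (Icc 0 1)ᶜ = 0) : μ (Ico 0 1)ᶜ = 0 := by
  obtain ⟨-, -, hg0, hg1⟩ := hg
  have hIco : μ (Ico 0 1) = 1 := by
    rw [hμ 0 1 le_rfl zero_le_one le_rfl, hg1, hg0, sub_zero, ENNReal.ofReal_one]
  rw [measure_congr (ae_eq_of_subset_of_measure_ge Ico_subset_Icc_self (by rw [hIco, hμ1])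
    measurableSet_Ico.nullMeasurableSet (by simp [hμ1])).compl, hμc]

end IsDistortion

theorem rho_eq_stieltjes_integral_of_leftContinuous_general {Ω : Type*} [MeasurableSpace Ω]
    (P : Measure Ω) [IsProbabilityMeasure P]
    (g : ℝ → ℝ) (hg : IsDistortion g)
    (μ : Measure ℝ)
    (hμ : ∀ a b : ℝ, 0 ≤ a → a ≤ b → b ≤ 1 → μ (Ico a b) = ENNReal.ofReal (g b - g a))
    (hμ1 : μ (Icc (0:ℝ) 1) = 1) (hμc : μ (Icc (0:ℝ) 1)ᶜ = 0)
    (X : Ω → ℝ) (hX : Measurable X) (hbd : ∃ C, ∀ ω, |X ω| ≤ C) :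
    rho P g X = ∫ u, lowerQuantile (fun x => (P {ω | X ω ≤ x}).toReal) (1 - u) ∂μ := by
  obtain ⟨C, hC⟩ := hbd
  have : IsProbabilityMeasure μ :=
    ⟨by rw [← measure_add_measure_compl measurableSet_Icc, hμ1, hμc, add_zero]⟩
  have hconc := hg.measure_compl_Ico_zero_one hμ hμ1 hμc
  have ha := cdf_map_eq_zero_of_lt_neg (P := P) hX hC
  have hb := cdf_map_eq_one (P := P) hX hC
  have htail : ∀ x, μ.real {u | x < lowerQuantile (cdf (P.map X)) (1 - u)} =
      g (P {ω | x < X ω}).toReal := fun x => by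
    have hS : 1 - cdf (P.map X) x ∈ Icc 0 1 := by
      constructor <;> linarith [cdf_nonneg (P.map X) x, cdf_le_one (P.map X) x]
    rw [measureReal_def, measure_lt_lowerQuantile_cdf_one_sub ha hb hconc, ← measureReal_def,
      hg.measureReal_Ico_zero hμ hS, toReal_measure_lt_eq_one_sub_cdf_map hX]
  rw [← funext (cdf_map_apply hX), integral_eq_integral_Iio_add_integral_Ioi_measureReal_lt
    (integrable_lowerQuantile_cdf_one_sub ha hb hconc)]
  simp only [htail, rho]

/-- For a left-continuous distortion function `g` and a bounded random variable `X`,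
`ρ_g(X) = ∫_{[0,1]} q_X(1 - u) dg(u)`, where the Lebesgue–Stieltjes integral is with
respect to the measure `μ` induced by `g` (i.e. `μ [a,b) = g b - g a`, concentrated
on `[0,1]` with total mass one). -/
theorem rho_eq_stieltjes_integral_of_leftContinuous {Ω : Type*} [MeasurableSpace Ω]
    (P : Measure Ω) [IsProbabilityMeasure P]
    (g : ℝ → ℝ) (hg : IsDistortion g)
    (hleft : ∀ u ∈ Ioc (0:ℝ) 1, ContinuousWithinAt g (Iic u) u)
    (μ : Measure ℝ)
    (hμ : ∀ a b : ℝ, 0 ≤ a → a ≤ b → b ≤ 1 → μ (Ico a b) = ENNReal.ofReal (g b - g a))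
    (hμ1 : μ (Icc (0:ℝ) 1) = 1) (hμc : μ (Icc (0:ℝ) 1)ᶜ = 0)
    (X : Ω → ℝ) (hX : Measurable X) (hbd : ∃ C, ∀ ω, |X ω| ≤ C) :
    rho P g X = ∫ u, lowerQuantile (fun x => (P {ω | X ω ≤ x}).toReal) (1 - u) ∂μ :=
  rho_eq_stieltjes_integral_of_leftContinuous_general P g hg μ hμ hμ1 hμc X hX hbd
end

section
/- The GlueV@R distortion function g with parameters 0 ≤ β < α ≤ 1 and 0 ≤ h₁ ≤ h₂ ≤ 1, defined by g(u) = (h₁/β)u on [0,β], g(u) = h₁ + (h₂-h₁)/(α-β)·(u-β) on (β,α], g(u) = 1 on (α,1], yields GlueV@R = w₁·AV@R_β + w₂·AV@R_α + w₃·V@R_α with w₁ = h₁ - (h₂-h₁)β/(α-β), w₂ = (h₂-h₁)α/(α-β), w₃ = 1 - h₂; in particular w₁ + w₂ + w₃ = 1 and w₁·g_{AV@R_β}(u) + w₂·g_{AV@R_α}(u) + w₃·g_{V@R_α}(u) = g(u) for all u ∈ [0,1]. -/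
open Set

/-- The AV@R distortion function at level `γ`. -/
noncomputable def gAVaR (γ : ℝ) (u : ℝ) : ℝ :=
  if u ≤ γ then u / γ else 1

/-- The V@R distortion function at level `γ` (on `[0,1]`). -/
noncomputable def gVaR (γ : ℝ) (u : ℝ) : ℝ :=
  if γ < u then 1 else 0

/-- The GlueV@R distortion function. -/
noncomputable def gGlue (β α h₁ h₂ : ℝ) (u : ℝ) : ℝ :=
  if u ≤ β then h₁ / β * u
  else if u ≤ α then h₁ + (h₂ - h₁) / (α - β) * (u - β)
  else 1

/-! On each of the three pieces `[0, β]`, `(β, α]`, `(α, 1]` all four distortion functions are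
affine in `u`, so the pointwise identity reduces to one field identity per piece; on the last
piece it is the statement that the weights sum to one. -/

section DistortionPieces

variable {β α γ h₁ h₂ u : ℝ}

theorem gAVaR_of_le (h : u ≤ γ) : gAVaR γ u = u / γ := if_pos h

theorem gAVaR_of_lt (h : γ < u) : gAVaR γ u = 1 := if_neg h.not_ge

theorem gVaR_of_le (h : u ≤ γ) : gVaR γ u = 0 := if_neg h.not_gt

theorem gVaR_of_lt (h : γ < u) : gVaR γ u = 1 := if_pos h

theorem gGlue_of_le (h : u ≤ β) : gGlue β α h₁ h₂ u = h₁ / β * u := if_pos h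

theorem gGlue_of_mem_Ioc (h : u ∈ Ioc β α) :
    gGlue β α h₁ h₂ u = h₁ + (h₂ - h₁) / (α - β) * (u - β) := by
  rw [gGlue, if_neg h.1.not_ge, if_pos h.2]

theorem gGlue_of_lt (hβα : β ≤ α) (h : α < u) : gGlue β α h₁ h₂ u = 1 := by
  rw [gGlue, if_neg (hβα.trans_lt h).not_ge, if_neg h.not_ge]

end DistortionPieces

theorem glueVaR_weights_sum {β α : ℝ} (hβα : β ≠ α) (h₁ h₂ : ℝ) :
    (h₁ - (h₂ - h₁) * β / (α - β)) + (h₂ - h₁) * α / (α - β) + (1 - h₂) = 1 := by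
  have : α - β ≠ 0 := sub_ne_zero.mpr hβα.symm
  field_simp
  ring

theorem glueVaR_decomposition_general (β α h₁ h₂ : ℝ)
    (hβ : 0 < β) (hβα : β < α) :
    (h₁ - (h₂ - h₁) * β / (α - β)) + (h₂ - h₁) * α / (α - β) + (1 - h₂) = 1 ∧
    ∀ u ∈ Icc (0:ℝ) 1,
      (h₁ - (h₂ - h₁) * β / (α - β)) * gAVaR β u
          + ((h₂ - h₁) * α / (α - β)) * gAVaR α u
          + (1 - h₂) * gVaR α u
        = gGlue β α h₁ h₂ u := by
  have hweights := glueVaR_weights_sum hβα.ne h₁ h₂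
  refine ⟨hweights, fun u _ => ?_⟩
  have hαβ : α - β ≠ 0 := sub_ne_zero.mpr hβα.ne'
  have hα : α ≠ 0 := (hβ.trans hβα).ne'
  rcases le_or_gt u β with huβ | hβu
  · have huα := huβ.trans hβα.le
    rw [gAVaR_of_le huβ, gAVaR_of_le huα, gVaR_of_le huα, gGlue_of_le huβ]
    field_simp
    ring
  rcases le_or_gt u α with huα | hαu
  · rw [gAVaR_of_lt hβu, gAVaR_of_le huα, gVaR_of_le huα, gGlue_of_mem_Ioc ⟨hβu, huα⟩]
    field_simp
    ring
  · rw [gAVaR_of_lt hβu, gAVaR_of_lt hαu, gVaR_of_lt hαu, gGlue_of_lt hβα.le hαu]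
    simpa only [mul_one] using hweights

/-- GlueV@R decomposes as `w₁·AV@R_β + w₂·AV@R_α + w₃·V@R_α` with
`w₁ = h₁ − (h₂−h₁)β/(α−β)`, `w₂ = (h₂−h₁)α/(α−β)`, `w₃ = 1 − h₂`: the weights sum to
one and the distortion functions satisfy the corresponding pointwise identity on `[0,1]`. -/
theorem glueVaR_decomposition (β α h₁ h₂ : ℝ)
    (hβ : 0 < β) (hβα : β < α) (hα : α ≤ 1)
    (h₁0 : 0 ≤ h₁) (h₁₂ : h₁ ≤ h₂) (h₂1 : h₂ ≤ 1) :
    (h₁ - (h₂ - h₁) * β / (α - β)) + (h₂ - h₁) * α / (α - β) + (1 - h₂) = 1 ∧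
    ∀ u ∈ Icc (0:ℝ) 1,
      (h₁ - (h₂ - h₁) * β / (α - β)) * gAVaR β u
          + ((h₂ - h₁) * α / (α - β)) * gAVaR α u
          + (1 - h₂) * gVaR α u
        = gGlue β α h₁ h₂ u :=
  glueVaR_decomposition_general β α h₁ h₂ hβ hβα
end

section
/- Let g_ν be the t-density with ν degrees of freedom and f_{ν,γ} the skewed-t density with skewness γ ≥ 1. Then the ratio f_{ν,γ}(x)/g_ν(x) is bounded above by k = ((γ + 1/γ)/2)·γ^{ν+1} for all x ∈ ℝ. -/
/-!
Since `γ ≥ 1`, the normalising factor `2 / (γ + 1/γ)` is at most `1 ≤ (γ + 1/γ)/2`, and the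
ratio of two t-densities `g_ν(y) / g_ν(x)` equals `((1 + x²/ν) / (1 + y²/ν)) ^ ((ν+1)/2)`.
For `x ≥ 0` and `y = x/γ` the base is at most `γ²`; for `x < 0` and `y = γx` it is even at most
`1`. Either way the ratio is at most `(γ²) ^ ((ν+1)/2) = γ^(ν+1)`.
-/

open Real

/-- The density of the t-distribution with `ν` degrees of freedom. -/
noncomputable def tDensity (ν : ℝ) (x : ℝ) : ℝ :=
  Real.Gamma ((ν + 1) / 2) / (Real.sqrt (ν * π) * Real.Gamma (ν / 2))
    * Real.rpow (1 + x ^ 2 / ν) (-((ν + 1) / 2))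

/-- The skewed-t density of Fernández and Steel. -/
noncomputable def skewTDensity (ν γ : ℝ) (x : ℝ) : ℝ :=
  2 / (γ + 1 / γ)
    * (if 0 ≤ x then tDensity ν (x / γ) else tDensity ν (γ * x))

lemma two_le_add_one_div {γ : ℝ} (hγ : 0 < γ) : 2 ≤ γ + 1 / γ := by
  have h : γ + 1 / γ - 2 = (γ - 1) ^ 2 / γ := by field_simp; ring
  linarith [div_nonneg (sq_nonneg (γ - 1)) hγ.le]

lemma two_div_le_div_two {s : ℝ} (hs : 2 ≤ s) : 2 / s ≤ s / 2 := by
  rw [div_le_div_iff₀ (by linarith) two_pos]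
  nlinarith

lemma tDensity_const_pos {ν : ℝ} (hν : 0 < ν) :
    0 < Gamma ((ν + 1) / 2) / (sqrt (ν * π) * Gamma (ν / 2)) :=
  div_pos (Gamma_pos_of_pos (by linarith))
    (mul_pos (sqrt_pos.mpr (mul_pos hν pi_pos)) (Gamma_pos_of_pos (by linarith)))

lemma tDensity_div_tDensity {ν : ℝ} (hν : 0 < ν) (x y : ℝ) :
    tDensity ν y / tDensity ν x = ((1 + x ^ 2 / ν) / (1 + y ^ 2 / ν)) ^ ((ν + 1) / 2) := by
  have hx : 0 < 1 + x ^ 2 / ν := by positivity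
  have hy : 0 < 1 + y ^ 2 / ν := by positivity
  unfold tDensity
  rw [mul_div_mul_left _ _ (tDensity_const_pos hν).ne', rpow_eq_pow, rpow_eq_pow,
    rpow_neg hy.le, rpow_neg hx.le, div_rpow hx.le hy.le]
  field_simp

lemma tDensity_div_le_rpow {ν c x y : ℝ} (hν : 0 < ν) (hc : 0 ≤ c)
    (h : 1 + x ^ 2 / ν ≤ c ^ 2 * (1 + y ^ 2 / ν)) :
    tDensity ν y / tDensity ν x ≤ c ^ (ν + 1) := by
  have hbase : (1 + x ^ 2 / ν) / (1 + y ^ 2 / ν) ≤ c ^ 2 := by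
    rwa [div_le_iff₀ (by positivity)]
  calc tDensity ν y / tDensity ν x
      = ((1 + x ^ 2 / ν) / (1 + y ^ 2 / ν)) ^ ((ν + 1) / 2) := tDensity_div_tDensity hν x y
    _ ≤ (c ^ 2) ^ ((ν + 1) / 2) := rpow_le_rpow (by positivity) hbase (by linarith)
    _ = c ^ (ν + 1) := by
      rw [← rpow_natCast, ← rpow_mul hc]
      norm_num [mul_div_cancel₀]

lemma skewT_branch_div_tDensity_le {ν γ : ℝ} (hν : 0 < ν) (hγ : 1 ≤ γ) (x : ℝ) :
    (if 0 ≤ x then tDensity ν (x / γ) else tDensity ν (γ * x)) / tDensity ν x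
      ≤ γ ^ (ν + 1) := by
  have hγ0 : 0 < γ := by linarith
  have hγ2 : 1 ≤ γ ^ 2 := one_le_pow₀ hγ
  have hx2 : 0 ≤ x ^ 2 / ν := by positivity
  split_ifs
  · refine tDensity_div_le_rpow hν hγ0.le ?_
    have : γ ^ 2 * (1 + (x / γ) ^ 2 / ν) = γ ^ 2 + x ^ 2 / ν := by field_simp
    linarith
  · refine tDensity_div_le_rpow hν hγ0.le ?_
    have : γ ^ 2 * (1 + (γ * x) ^ 2 / ν) = γ ^ 2 + (γ ^ 2) ^ 2 * (x ^ 2 / ν) := by ring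
    nlinarith [one_le_pow₀ (n := 2) hγ2]

/-- Acceptance–rejection bound: for `γ ≥ 1`, the ratio of the skewed-t density to the
t-density is bounded above by `k = ((γ + 1/γ)/2)·γ^(ν+1)` for all `x`. -/
theorem skewT_density_ratio_bound (ν γ : ℝ) (hν : 0 < ν) (hγ : 1 ≤ γ) :
    ∀ x : ℝ, skewTDensity ν γ x / tDensity ν x
      ≤ (γ + 1 / γ) / 2 * Real.rpow γ (ν + 1) := by
  intro x
  have hγ0 : 0 < γ := by linarith
  have hs := two_le_add_one_div hγ0
  unfold skewTDensity
  rw [mul_div_assoc, rpow_eq_pow]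
  calc 2 / (γ + 1 / γ) * ((if 0 ≤ x then tDensity ν (x / γ) else tDensity ν (γ * x))
        / tDensity ν x)
      ≤ 2 / (γ + 1 / γ) * γ ^ (ν + 1) :=
        mul_le_mul_of_nonneg_left (skewT_branch_div_tDensity_le hν hγ x) (by positivity)
    _ ≤ (γ + 1 / γ) / 2 * γ ^ (ν + 1) :=
        mul_le_mul_of_nonneg_right (two_div_le_div_two hs) (rpow_nonneg hγ0.le _)
end
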